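/- Let M = M(A) be a matroid represented by a matrix A over a finite field F, and suppose M contains a restriction M' = M[S] with csd(M') = csd(M) = d. Then every progressive vector for M lies in span(S), where a vector v is progressive if csd(M/v) < csd(M). Consequently, the number of progressive vectors for M is at most |F|^{|S|}. -/

import Mathlib

/-!
A represented matroid is given by its family of column vectors
`w : ι → (Fin m → F)`.  Independence is considered relative to a subspace `K`
of contracted vectors, and relative to a ground subset `S ⊆ ι`
(the restriction `M[S]`), following the definition of `csd(A, {v₁,…,vₖ})`.
-/

/-- `D` is a dependent subset of the ground set `S` in the matroid of the
columns `w` contracted by the subspace `K`: some nontrivial linear combination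
of the columns in `D` lies in `K`. -/
def depOn {F : Type*} [Field F] {ι : Type*} [Fintype ι] {m : ℕ}
    (w : ι → Fin m → F) (K : Submodule F (Fin m → F)) (S D : Set ι) : Prop :=
  D ⊆ S ∧ ∃ c : ι → F, (∀ i ∉ D, c i = 0) ∧ c ≠ 0 ∧ (∑ i, c i • w i) ∈ K

/-- A circuit: a minimal dependent set. -/
def circuitOn {F : Type*} [Field F] {ι : Type*} [Fintype ι] {m : ℕ}
    (w : ι → Fin m → F) (K : Submodule F (Fin m → F)) (S C : Set ι) : Prop :=
  depOn w K S C ∧ ∀ D ⊂ C, ¬ depOn w K S D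

/-- Two elements of `S` lie in a common circuit (or are equal). -/
def relOn {F : Type*} [Field F] {ι : Type*} [Fintype ι] {m : ℕ}
    (w : ι → Fin m → F) (K : Submodule F (Fin m → F)) (S : Set ι)
    (e f : ι) : Prop :=
  e = f ∨ ∃ C, circuitOn w K S C ∧ e ∈ C ∧ f ∈ C

/-- The matroid restricted to `S` (contracted by `K`) is connected. -/
def connOn {F : Type*} [Field F] {ι : Type*} [Fintype ι] {m : ℕ}
    (w : ι → Fin m → F) (K : Submodule F (Fin m → F)) (S : Set ι) : Prop :=
  ∀ e ∈ S, ∀ f ∈ S, relOn w K S e f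

/-- `CsdLE w S K d`: the contraction*-depth of the matroid of the columns
`w i`, `i ∈ S`, contracted by `K`, is at most `d`.  (Rank `0` gives `0`;
a disconnected matroid gives the maximum over connected components;
a connected matroid gives `1` plus the minimum over contractions by a single
arbitrary vector `v` of the ambient space.) -/
inductive CsdLE {F : Type*} [Field F] {ι : Type*} [Fintype ι] {m : ℕ}
    (w : ι → Fin m → F) : Set ι → Submodule F (Fin m → F) → ℕ → Prop
  | rank0 (S K d) : (∀ i ∈ S, w i ∈ K) → CsdLE w S K d
  | comp (S K d) : ¬ connOn w K S →
      (∀ e ∈ S, CsdLE w {f ∈ S | relOn w K S e f} K d) → CsdLE w S K d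
  | contr (S K d v) : connOn w K S →
      CsdLE w S (K ⊔ Submodule.span F {v}) d → CsdLE w S K (d + 1)

/-- `CdLEr w S K d`: the contraction-depth of the matroid of the columns
`w i`, `i ∈ S`, contracted by `K`, is at most `d`.  (A single element gives
`1`; a disconnected matroid gives the maximum over connected components; a
connected matroid gives `1` plus the minimum over contractions of a single
element of the matroid.) -/
inductive CdLEr {F : Type*} [Field F] {ι : Type*} [Fintype ι] {m : ℕ}
    (w : ι → Fin m → F) : Set ι → Submodule F (Fin m → F) → ℕ → Prop
  | empty (S K d) : S = ∅ → CdLEr w S K d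
  | single (S K d e) : S = {e} → CdLEr w S K (d + 1)
  | comp (S K d) : ¬ connOn w K S →
      (∀ e ∈ S, CdLEr w {f ∈ S | relOn w K S e f} K d) → CdLEr w S K d
  | contr (S K d e) : connOn w K S → e ∈ S →
      CdLEr w (S \ {e}) (K ⊔ Submodule.span F {w e}) d → CdLEr w S K (d + 1)

/-- The contraction*-depth of `M(A)[S]/K`. -/
noncomputable def csdR {F : Type*} [Field F] {ι : Type*} [Fintype ι] {m : ℕ}
    (w : ι → Fin m → F) (S : Set ι) (K : Submodule F (Fin m → F)) : ℕ :=
  sInf {d | CsdLE w S K d}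

/-- The contraction-depth of `M(A)[S]/K`. -/
noncomputable def cdR {F : Type*} [Field F] {ι : Type*} [Fintype ι] {m : ℕ}
    (w : ι → Fin m → F) (S : Set ι) (K : Submodule F (Fin m → F)) : ℕ :=
  sInf {d | CdLEr w S K d}

/-!
STATEMENT 18: Let `M = M(A)` be represented over a finite field `F` and
suppose `M` has a restriction `M' = M[S]` with `csd(M') = csd(M) = d`.
A vector `v` is progressive if `csd(M/v) < d`.  Then every progressive vector
lies in `span(S)`, and hence the number of progressive vectors is at most
`|F| ^ |S|`.
-/

section Infra18
open Function Set Submodule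
variable {F : Type*} [Field F] {ι : Type*} [Fintype ι] {m : ℕ}
  {w : ι → Fin m → F} {K K' : Submodule F (Fin m → F)} {S T : Set ι}

private lemma depOn_of_support {c : ι → F} (hS : Function.support c ⊆ S) (hc : c ≠ 0)
    (hK : (∑ i, c i • w i) ∈ K) : depOn w K S (Function.support c) :=
  ⟨hS, c, fun i hi => Function.notMem_support.mp hi, hc, hK⟩

private lemma sum_mem_span {c : ι → F} (hS : Function.support c ⊆ S) :
    (∑ i, c i • w i) ∈ Submodule.span F (w '' S) := by
  refine Submodule.sum_mem _ fun i _ => ?_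
  by_cases h : c i = 0
  · simp [h]
  · exact Submodule.smul_mem _ _ (Submodule.subset_span ⟨i, hS h, rfl⟩)

private lemma exists_circuit_through_aux :
    ∀ (n : ℕ) (c : ι → F), (Function.support c).ncard ≤ n → Function.support c ⊆ S →
      (∑ i, c i • w i) ∈ K → ∀ f, c f ≠ 0 →
      ∃ C, circuitOn w K S C ∧ f ∈ C ∧ C ⊆ Function.support c := by
  intro n
  induction n with
  | zero =>
    intro c hn _ _ f hf
    have hmem : f ∈ Function.support c := hf
    have hfin : (Function.support c).Finite := Set.toFinite _
    rw [Nat.le_zero, Set.ncard_eq_zero hfin] at hn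
    simp [hn] at hmem
  | succ n ih =>
    intro c hn hcS hcK f hf
    by_cases hmin : ∀ D ⊂ Function.support c, ¬ depOn w K S D
    · exact ⟨_, ⟨depOn_of_support hcS (fun h0 => hf (by simp [h0])) hcK, hmin⟩, hf,
        subset_rfl⟩
    · push_neg at hmin
      obtain ⟨D, hDsub, hDS, y, hy0, hyne, hyK⟩ := hmin
      have hysupp : Function.support y ⊆ D := fun i hi => by
        by_contra h; exact hi (hy0 i h)
      have hyss : Function.support y ⊂ Function.support c :=
        lt_of_le_of_lt hysupp hDsub
      by_cases hyf : y f = 0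
      · obtain ⟨g, hg⟩ := Function.ne_iff.mp hyne
        simp only [Pi.zero_apply] at hg
        set c' : ι → F := y g • c - c g • y with hc'
        have hc'f : c' f ≠ 0 := by
          simp only [hc', Pi.sub_apply, Pi.smul_apply, smul_eq_mul, hyf, mul_zero, sub_zero]
          exact mul_ne_zero hg hf
        have hsub' : Function.support c' ⊆ Function.support c \ {g} := by
          intro i hi
          constructor
          · by_contra h
            have hci : c i = 0 := Function.notMem_support.mp h
            have hyi : y i = 0 := by
              by_contra h'
              exact h (hyss.le (Function.mem_support.mpr h'))
            simp [hc', hci, hyi] at hi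
          · intro h
            rw [Set.mem_singleton_iff] at h
            subst h
            simp [hc', mul_comm] at hi
        have hK' : (∑ i, c' i • w i) ∈ K := by
          have heq : (∑ i, c' i • w i)
              = y g • (∑ i, c i • w i) - c g • (∑ i, y i • w i) := by
            rw [Finset.smul_sum, Finset.smul_sum, ← Finset.sum_sub_distrib]
            refine Finset.sum_congr rfl fun i _ => ?_
            simp [hc', sub_smul, smul_smul]
          rw [heq]
          exact K.sub_mem (K.smul_mem _ hcK) (K.smul_mem _ hyK)
        have hgc : g ∈ Function.support c := hyss.le (Function.mem_support.mpr hg)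
        have hss : Function.support c' ⊂ Function.support c := by
          refine lt_of_le_of_ne (hsub'.trans Set.diff_subset) fun h => ?_
          have : g ∈ Function.support c \ {g} := hsub' (h ▸ hgc)
          simp at this
        have hlt : (Function.support c').ncard ≤ n := by
          have := Set.ncard_lt_ncard hss (Set.toFinite _)
          omega
        obtain ⟨C, hC, hfC, hCsub⟩ := ih c' hlt (hss.le.trans hcS) hK' f hc'f
        exact ⟨C, hC, hfC, hCsub.trans hss.le⟩
      · have hylt : (Function.support y).ncard < (Function.support c).ncard :=
          Set.ncard_lt_ncard hyss (Set.toFinite _)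
        obtain ⟨C, hC, hfC, hCsub⟩ := ih y (by omega)
          ((hysupp.trans hDsub.le).trans hcS) hyK f hyf
        exact ⟨C, hC, hfC, hCsub.trans hyss.le⟩

private lemma exists_circuit_through {c : ι → F} (hcS : Function.support c ⊆ S)
    (hcK : (∑ i, c i • w i) ∈ K) {f : ι} (hf : c f ≠ 0) :
    ∃ C, circuitOn w K S C ∧ f ∈ C ∧ C ⊆ Function.support c :=
  exists_circuit_through_aux _ c le_rfl hcS hcK f hf

private lemma circuit_exists_vec {C : Set ι} (hC : circuitOn w K S C) :
    ∃ c : ι → F, Function.support c = C ∧ (∑ i, c i • w i) ∈ K := by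
  obtain ⟨⟨hCS, c, h0, hne, hK⟩, hmin⟩ := hC
  have hsupp : Function.support c ⊆ C := fun i hi => by
    by_contra h; exact hi (h0 i h)
  refine ⟨c, ?_, hK⟩
  by_contra hne'
  exact hmin _ (lt_of_le_of_ne hsupp hne') (depOn_of_support (hsupp.trans hCS) hne hK)

private lemma circuit_subset_ground {C : Set ι} (hC : circuitOn w K S C) : C ⊆ S := hC.1.1

private lemma circuit_eq_of_subset {C C' : Set ι} (hC : circuitOn w K S C)
    (hC' : circuitOn w K S C') (h : C' ⊆ C) : C' = C := by
  by_contra hne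
  exact hC.2 C' (lt_of_le_of_ne h hne) hC'.1

private lemma circuit_elim {C1 C2 : Set ι} (h1 : circuitOn w K S C1) (h2 : circuitOn w K S C2)
    {x e : ι} (hx1 : x ∈ C1) (hx2 : x ∈ C2) (he : e ∈ C1) (he2 : e ∉ C2) :
    ∃ C, circuitOn w K S C ∧ e ∈ C ∧ C ⊆ (C1 ∪ C2) \ {x} := by
  obtain ⟨d1, hd1, hK1⟩ := circuit_exists_vec h1
  obtain ⟨d2, hd2, hK2⟩ := circuit_exists_vec h2
  set c : ι → F := d2 x • d1 - d1 x • d2 with hc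
  have hd2e : d2 e = 0 := by
    rw [← Function.notMem_support, hd2]; exact he2
  have hce : c e ≠ 0 := by
    have h1' : d1 e ≠ 0 := by rw [← Function.mem_support, hd1]; exact he
    have h2' : d2 x ≠ 0 := by rw [← Function.mem_support, hd2]; exact hx2
    simp only [hc, Pi.sub_apply, Pi.smul_apply, smul_eq_mul, hd2e, mul_zero, sub_zero]
    exact mul_ne_zero h2' h1'
  have hsub : Function.support c ⊆ (C1 ∪ C2) \ {x} := by
    intro i hi
    constructor
    · by_contra h
      rw [Set.mem_union, not_or, ← hd1, ← hd2] at h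
      simp only [Function.mem_support, not_not] at h
      simp [hc, h.1, h.2] at hi
    · intro h
      rw [Set.mem_singleton_iff] at h; subst h
      simp [hc, mul_comm] at hi
  have hK' : (∑ i, c i • w i) ∈ K := by
    have heq : (∑ i, c i • w i)
        = d2 x • (∑ i, d1 i • w i) - d1 x • (∑ i, d2 i • w i) := by
      rw [Finset.smul_sum, Finset.smul_sum, ← Finset.sum_sub_distrib]
      refine Finset.sum_congr rfl fun i _ => ?_
      simp [hc, sub_smul, smul_smul]
    rw [heq]
    exact K.sub_mem (K.smul_mem _ hK1) (K.smul_mem _ hK2)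
  have hcS : Function.support c ⊆ S :=
    hsub.trans (Set.diff_subset.trans
      (Set.union_subset (circuit_subset_ground h1) (circuit_subset_ground h2)))
  obtain ⟨C, hC, heC, hCsub⟩ := exists_circuit_through hcS hK' hce
  exact ⟨C, hC, heC, hCsub.trans hsub⟩

private lemma circuit_trans_aux :
    ∀ (n : ℕ) (C1 C2 : Set ι), circuitOn w K S C1 → circuitOn w K S C2 →
      (C1 ∪ C2).ncard ≤ n → ∀ e ∈ C1, ∀ g ∈ C2, (C1 ∩ C2).Nonempty →
      ∃ C, circuitOn w K S C ∧ e ∈ C ∧ g ∈ C := by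
  intro n
  induction n with
  | zero =>
    intro C1 C2 h1 h2 hn e he g hg _
    have hmem : e ∈ C1 ∪ C2 := Or.inl he
    rw [Nat.le_zero, Set.ncard_eq_zero (Set.toFinite _)] at hn
    simp [hn] at hmem
  | succ n ih =>
    intro C1 C2 h1 h2 hn e he g hg hne
    by_cases heg2 : e ∈ C2
    · exact ⟨C2, h2, heg2, hg⟩
    by_cases hg1 : g ∈ C1
    · exact ⟨C1, h1, he, hg1⟩
    obtain ⟨x0, hx01, hx02⟩ := hne
    obtain ⟨C3, h3, heC3, h3sub⟩ := circuit_elim h1 h2 hx01 hx02 he heg2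
    by_cases hgC3 : g ∈ C3
    · exact ⟨C3, h3, heC3, hgC3⟩
    have hx0C3 : x0 ∉ C3 := fun hc => (h3sub hc).2 rfl
    have hx1 : ∃ x1, x1 ∈ C3 ∧ x1 ∉ C1 := by
      by_contra h; push_neg at h
      exact hx0C3 ((circuit_eq_of_subset h1 h3 h) ▸ hx01)
    obtain ⟨x1, hx13, hx11⟩ := hx1
    have hx12 : x1 ∈ C2 := ((h3sub hx13).1.resolve_left hx11)
    obtain ⟨C4, h4, hgC4, h4sub⟩ := circuit_elim h2 h3 hx12 hx13 hg hgC3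
    by_cases heC4 : e ∈ C4
    · exact ⟨C4, h4, heC4, hgC4⟩
    have hx1C4 : x1 ∉ C4 := fun hc => (h4sub hc).2 rfl
    have hy : ∃ y, y ∈ C4 ∧ y ∉ C2 := by
      by_contra h; push_neg at h
      exact hx1C4 ((circuit_eq_of_subset h2 h4 h) ▸ hx12)
    obtain ⟨y, hy4, hy2⟩ := hy
    have hy3 : y ∈ C3 := ((h4sub hy4).1.resolve_left hy2)
    have hy1 : y ∈ C1 := ((h3sub hy3).1.resolve_right hy2)
    have hC4sub : C4 ⊆ C1 ∪ C2 := fun z hz => by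
      rcases (h4sub hz).1 with h | h
      · exact Or.inr h
      · exact (h3sub h).1
    have hunion : C1 ∪ C4 ⊆ (C1 ∪ C2) \ {x1} := by
      intro z hz
      refine ⟨?_, ?_⟩
      · rcases hz with h | h
        · exact Or.inl h
        · exact hC4sub h
      · intro hz1; rw [Set.mem_singleton_iff] at hz1; subst hz1
        rcases hz with h | h
        · exact hx11 h
        · exact hx1C4 h
    have hlt : (C1 ∪ C4).ncard ≤ n := by
      have ha : (C1 ∪ C4).ncard ≤ ((C1 ∪ C2) \ {x1}).ncard :=
        Set.ncard_le_ncard hunion (Set.toFinite _)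
      have hb : ((C1 ∪ C2) \ {x1}).ncard < (C1 ∪ C2).ncard :=
        Set.ncard_lt_ncard ⟨Set.diff_subset, fun hsub => (hsub (Or.inr hx12)).2 rfl⟩
          (Set.toFinite _)
      omega
    exact ih C1 C4 h1 h4 hlt e he g hgC4 ⟨y, hy1, hy4⟩

private lemma relOn_symm {e f : ι} (h : relOn w K S e f) : relOn w K S f e := by
  rcases h with rfl | ⟨C, hC, he, hf⟩
  · exact Or.inl rfl
  · exact Or.inr ⟨C, hC, hf, he⟩

private lemma relOn_trans {e f g : ι} (h1 : relOn w K S e f) (h2 : relOn w K S f g) :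
    relOn w K S e g := by
  rcases h1 with rfl | ⟨C1, hC1, he1, hf1⟩
  · exact h2
  rcases h2 with rfl | ⟨C2, hC2, hf2, hg2⟩
  · exact Or.inr ⟨C1, hC1, he1, hf1⟩
  exact Or.inr (circuit_trans_aux _ C1 C2 hC1 hC2 le_rfl e he1 g hg2 ⟨f, hf1, hf2⟩)

private lemma depOn_ground {D : Set ι} (hDS : D ⊆ S) (hST : S ⊆ T) :
    depOn w K S D ↔ depOn w K T D := by
  constructor
  · rintro ⟨_, h⟩; exact ⟨hDS.trans hST, h⟩
  · rintro ⟨_, h⟩; exact ⟨hDS, h⟩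

private lemma circuitOn_ground {C : Set ι} (hCS : C ⊆ S) (hST : S ⊆ T) :
    circuitOn w K S C ↔ circuitOn w K T C := by
  unfold circuitOn
  rw [depOn_ground hCS hST]
  refine and_congr_right fun _ => ?_
  refine forall_congr' fun D => forall_congr' fun hD => ?_
  rw [depOn_ground (hD.le.trans hCS) hST]

private lemma relOn_ground {e f : ι} (hST : S ⊆ T) (h : relOn w K S e f) :
    relOn w K T e f := by
  rcases h with rfl | ⟨C, hC, he, hf⟩
  · exact Or.inl rfl
  · exact Or.inr ⟨C, (circuitOn_ground (circuit_subset_ground hC) hST).mp hC, he, hf⟩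

private lemma connOn_comp {e : ι} (he : e ∈ S) :
    connOn w K {f ∈ S | relOn w K S e f} := by
  intro x hx y hy
  rcases eq_or_ne x y with rfl | hxy
  · exact Or.inl rfl
  have hrel : relOn w K S x y := relOn_trans (relOn_symm hx.2) hy.2
  rcases hrel with rfl | ⟨C, hC, hxC, hyC⟩
  · exact Or.inl rfl
  have hCsub : C ⊆ {f ∈ S | relOn w K S e f} := by
    intro z hz
    exact ⟨circuit_subset_ground hC hz, relOn_trans hx.2 (Or.inr ⟨C, hC, hxC, hz⟩)⟩
  exact Or.inr ⟨C, (circuitOn_ground hCsub (Set.sep_subset _ _)).mpr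
    ((circuitOn_ground (circuit_subset_ground hC) subset_rfl).mp hC), hxC, hyC⟩

/-- Restriction monotonicity. -/
private lemma CsdLE_restrict {T : Set ι} {K : Submodule F (Fin m → F)} {d : ℕ}
    (h : CsdLE w T K d) : ∀ S ⊆ T, CsdLE w S K d := by
  induction h with
  | rank0 T K d h =>
    intro S hST
    exact CsdLE.rank0 _ _ _ fun i hi => h i (hST hi)
  | comp T K d hconn hcomp ih =>
    intro S hST
    by_cases hc : connOn w K S
    · rcases Set.eq_empty_or_nonempty S with rfl | ⟨e, he⟩
      · exact CsdLE.rank0 _ _ _ (by simp)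
      · exact ih e (hST he) S fun f hf => ⟨hST hf, relOn_ground hST (hc e he f hf)⟩
    · exact CsdLE.comp _ _ _ hc fun e he =>
        ih e (hST he) _ fun f hf => ⟨hST hf.1, relOn_ground hST hf.2⟩
  | contr T K d v hconn h ih =>
    intro S hST
    by_cases hc : connOn w K S
    · exact CsdLE.contr _ _ _ v hc (ih S hST)
    · refine CsdLE.comp _ _ _ hc fun e he => ?_
      exact CsdLE.contr _ _ _ v (connOn_comp he) (ih _ fun f hf => hST hf.1)

private lemma depOn_K_congr_aux {D : Set ι}
    (h : Submodule.span F (w '' S) ⊓ K = Submodule.span F (w '' S) ⊓ K')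
    (hd : depOn w K S D) : depOn w K' S D := by
  obtain ⟨hDS, c, h0, hne, hK⟩ := hd
  have hsupp : Function.support c ⊆ S := fun i hi => hDS (by
    by_contra hx; exact hi (h0 i hx))
  have : (∑ i, c i • w i) ∈ Submodule.span F (w '' S) ⊓ K := ⟨sum_mem_span hsupp, hK⟩
  rw [h] at this
  exact ⟨hDS, c, h0, hne, this.2⟩

private lemma depOn_K_congr {D : Set ι}
    (h : Submodule.span F (w '' S) ⊓ K = Submodule.span F (w '' S) ⊓ K') :
    depOn w K S D ↔ depOn w K' S D :=
  ⟨depOn_K_congr_aux h, depOn_K_congr_aux h.symm⟩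

private lemma circuitOn_K_congr {C : Set ι}
    (h : Submodule.span F (w '' S) ⊓ K = Submodule.span F (w '' S) ⊓ K') :
    circuitOn w K S C ↔ circuitOn w K' S C := by
  unfold circuitOn
  rw [depOn_K_congr h]
  exact and_congr_right fun _ => forall_congr' fun D => forall_congr' fun _ =>
    (depOn_K_congr h).not

private lemma relOn_K_congr {e f : ι}
    (h : Submodule.span F (w '' S) ⊓ K = Submodule.span F (w '' S) ⊓ K') :
    relOn w K S e f ↔ relOn w K' S e f := by
  unfold relOn
  exact or_congr Iff.rfl (exists_congr fun C =>
    and_congr_left fun _ => circuitOn_K_congr h)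

private lemma connOn_K_congr
    (h : Submodule.span F (w '' S) ⊓ K = Submodule.span F (w '' S) ⊓ K') :
    connOn w K S ↔ connOn w K' S := by
  unfold connOn
  exact forall₂_congr fun e _ => forall₂_congr fun f _ => relOn_K_congr h

private lemma mem_sup_span {V : Type*} [AddCommGroup V] [Module F V]
    {K : Submodule F V} {u x : V} (h : x ∈ K ⊔ Submodule.span F {u}) :
    ∃ k ∈ K, ∃ a : F, x = k + a • u := by
  rw [Submodule.mem_sup] at h
  obtain ⟨k, hk, y, hy, rfl⟩ := h
  obtain ⟨a, rfl⟩ := Submodule.mem_span_singleton.mp hy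
  exact ⟨k, hk, a, rfl⟩

/-- Exchange of contracted subspaces having the same intersection with the span. -/
private lemma CsdLE_exchange {S : Set ι} {K : Submodule F (Fin m → F)} {d : ℕ}
    (h : CsdLE w S K d) :
    ∀ K', Submodule.span F (w '' S) ⊓ K = Submodule.span F (w '' S) ⊓ K' →
      CsdLE w S K' d := by
  induction h with
  | rank0 S K d h =>
    intro K' hK'
    refine CsdLE.rank0 _ _ _ fun i hi => ?_
    have hmem : w i ∈ Submodule.span F (w '' S) ⊓ K :=
      ⟨Submodule.subset_span ⟨i, hi, rfl⟩, h i hi⟩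
    rw [hK'] at hmem
    exact hmem.2
  | comp S K d hconn hcomp ih =>
    intro K' hK'
    have hset : ∀ e, {f ∈ S | relOn w K' S e f} = {f ∈ S | relOn w K S e f} := by
      intro e; ext f; exact and_congr_right fun _ => (relOn_K_congr hK').symm
    refine CsdLE.comp _ _ _ (fun hc => hconn ((connOn_K_congr hK').mpr hc)) fun e he => ?_
    rw [hset e]
    refine ih e he K' ?_
    have hle : Submodule.span F (w '' {f ∈ S | relOn w K S e f})
        ≤ Submodule.span F (w '' S) :=
      Submodule.span_mono (Set.image_mono (Set.sep_subset _ _))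
    calc Submodule.span F (w '' {f ∈ S | relOn w K S e f}) ⊓ K
        = Submodule.span F (w '' {f ∈ S | relOn w K S e f})
            ⊓ (Submodule.span F (w '' S) ⊓ K) := by
          rw [← inf_assoc, inf_eq_left.mpr hle]
      _ = Submodule.span F (w '' {f ∈ S | relOn w K S e f})
            ⊓ (Submodule.span F (w '' S) ⊓ K') := by rw [hK']
      _ = Submodule.span F (w '' {f ∈ S | relOn w K S e f}) ⊓ K' := by
          rw [← inf_assoc, inf_eq_left.mpr hle]
  | contr S K d v hconn h ih =>
    intro K' hK'
    have hconn' : connOn w K' S := (connOn_K_congr hK').mp hconn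
    by_cases hcase : Submodule.span F (w '' S) ⊓ (K ⊔ Submodule.span F {v}) ≤ K
    · refine CsdLE.contr _ _ _ 0 hconn' (ih (K' ⊔ Submodule.span F {(0 : Fin m → F)}) ?_)
      have h0 : K' ⊔ Submodule.span F {(0 : Fin m → F)} = K' := by
        simp [Submodule.span_zero_singleton]
      rw [h0, ← hK']
      refine le_antisymm (le_inf inf_le_left hcase) ?_
      exact inf_le_inf_left _ le_sup_left
    · rw [SetLike.not_le_iff_exists] at hcase
      obtain ⟨v', hv'W1, hv'K⟩ := hcase
      obtain ⟨hv'W, hv'Kv⟩ := hv'W1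
      refine CsdLE.contr _ _ _ v' hconn' (ih (K' ⊔ Submodule.span F {v'}) ?_)
      obtain ⟨k0, hk0, b, hv'eq⟩ := mem_sup_span hv'Kv
      have hb : b ≠ 0 := by
        rintro rfl
        rw [zero_smul, add_zero] at hv'eq
        exact hv'K (hv'eq ▸ hk0)
      apply le_antisymm
      · rintro x ⟨hxW, hxKv⟩
        obtain ⟨k, hk, a, hxeq⟩ := mem_sup_span hxKv
        have hkey : x - (a / b) • v' ∈ Submodule.span F (w '' S) ⊓ K := by
          constructor
          · exact Submodule.sub_mem _ hxW (Submodule.smul_mem _ _ hv'W)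
          · have : x - (a / b) • v' = k - (a / b) • k0 := by
              rw [hxeq, hv'eq]
              rw [smul_add, smul_smul]
              rw [div_mul_cancel₀ _ hb]
              abel
            rw [this]
            exact Submodule.sub_mem _ hk (Submodule.smul_mem _ _ hk0)
        rw [hK'] at hkey
        refine ⟨hxW, ?_⟩
        have hx' : x = (x - (a / b) • v') + (a / b) • v' := by abel
        rw [hx']
        exact Submodule.add_mem _ (Submodule.mem_sup_left hkey.2)
          (Submodule.smul_mem _ _ (Submodule.mem_sup_right (Submodule.mem_span_singleton_self _)))
      · rintro x ⟨hxW, hxK'v⟩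
        obtain ⟨k', hk', a, hxeq⟩ := mem_sup_span hxK'v
        have hk'W : k' ∈ Submodule.span F (w '' S) ⊓ K' := by
          refine ⟨?_, hk'⟩
          have : k' = x - a • v' := by rw [hxeq]; abel
          rw [this]
          exact Submodule.sub_mem _ hxW (Submodule.smul_mem _ _ hv'W)
        rw [← hK'] at hk'W
        refine ⟨hxW, ?_⟩
        rw [hxeq]
        exact Submodule.add_mem _ (Submodule.mem_sup_left hk'W.2)
          (Submodule.smul_mem _ _ hv'Kv)

/-- Monotonicity in the depth bound. -/
private lemma CsdLE_succ {S : Set ι} {K : Submodule F (Fin m → F)} {d : ℕ}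
    (h : CsdLE w S K d) : CsdLE w S K (d + 1) := by
  induction h with
  | rank0 S K d h => exact CsdLE.rank0 _ _ _ h
  | comp S K d hconn hcomp ih => exact CsdLE.comp _ _ _ hconn ih
  | contr S K d v hconn h ih => exact CsdLE.contr _ _ _ v hconn ih

private lemma CsdLE_mono {S : Set ι} {K : Submodule F (Fin m → F)} {d d' : ℕ}
    (hdd : d ≤ d') (h : CsdLE w S K d) : CsdLE w S K d' := by
  induction hdd with
  | refl => exact h
  | step _ ih => exact CsdLE_succ ih

/-- Existence: the depth is finite. -/
private lemma CsdLE_exists :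
    ∀ (n : ℕ) (K : Submodule F (Fin m → F)), m ≤ Module.finrank F K + n →
      ∀ S : Set ι, CsdLE w S K n := by
  intro n
  induction n with
  | zero =>
    intro K hK S
    have hfr : Module.finrank F K = m := by
      have h1 : Module.finrank F K ≤ Module.finrank F (Fin m → F) :=
        Submodule.finrank_le K
      rw [Module.finrank_fintype_fun_eq_card, Fintype.card_fin] at h1
      omega
    have hKtop : K = ⊤ := Submodule.eq_top_of_finrank_eq (by
      rw [hfr, Module.finrank_fintype_fun_eq_card, Fintype.card_fin])
    exact CsdLE.rank0 _ _ _ fun i _ => hKtop ▸ Submodule.mem_top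
  | succ n ih =>
    intro K hK S
    by_cases hall : ∀ i ∈ S, w i ∈ K
    · exact CsdLE.rank0 _ _ _ hall
    · push_neg at hall
      have hcontr : ∀ (i₀ : ι), w i₀ ∉ K → ∀ S' : Set ι,
          CsdLE w S' (K ⊔ Submodule.span F {w i₀}) n := by
        intro i₀ hi₀ S'
        refine ih _ ?_ S'
        have hlt : K < K ⊔ Submodule.span F {w i₀} := by
          refine lt_of_le_of_ne le_sup_left fun he => ?_
          exact hi₀ (he ▸ Submodule.mem_sup_right (Submodule.mem_span_singleton_self _))
        have := Submodule.finrank_lt_finrank_of_lt hlt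
        omega
      obtain ⟨i₀, hi₀S, hi₀K⟩ := hall
      by_cases hc : connOn w K S
      · exact CsdLE.contr _ _ _ (w i₀) hc (hcontr i₀ hi₀K S)
      · refine CsdLE.comp _ _ _ hc fun e he => ?_
        by_cases hall' : ∀ i ∈ {f ∈ S | relOn w K S e f}, w i ∈ K
        · exact CsdLE.rank0 _ _ _ hall'
        · push_neg at hall'
          obtain ⟨i₁, hi₁S, hi₁K⟩ := hall'
          exact CsdLE.contr _ _ _ (w i₁) (connOn_comp he) (hcontr i₁ hi₁K _)

end Infra18

theorem stmt18 {F : Type*} [Field F] [Fintype F] {ι : Type*} [Fintype ι]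
    {m : ℕ} (w : ι → Fin m → F) (S : Set ι) (d : ℕ)
    (hS : csdR w S ⊥ = d) (hM : csdR w Set.univ ⊥ = d) :
    (∀ v : Fin m → F, csdR w Set.univ (Submodule.span F {v}) < d →
        v ∈ Submodule.span F (w '' S)) ∧
      {v : Fin m → F |
          csdR w Set.univ (Submodule.span F {v}) < d}.ncard ≤
        Fintype.card F ^ S.ncard := by
  classical
  have part1 : ∀ v : Fin m → F, csdR w Set.univ (Submodule.span F {v}) < d →
      v ∈ Submodule.span F (w '' S) := by
    intro v hv
    by_contra hvW
    have hWv : Submodule.span F (w '' S) ⊓ Submodule.span F {v}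
        = Submodule.span F (w '' S) ⊓ (⊥ : Submodule F (Fin m → F)) := by
      rw [inf_bot_eq]
      refine le_antisymm ?_ bot_le
      rintro x ⟨hxW, hxv⟩
      obtain ⟨a, rfl⟩ := Submodule.mem_span_singleton.mp hxv
      rcases eq_or_ne a 0 with rfl | ha
      · simp
      · exfalso
        apply hvW
        have := (Submodule.span F (w '' S)).smul_mem a⁻¹ hxW
        rwa [inv_smul_smul₀ ha] at this
    have hne : {d' | CsdLE w Set.univ (Submodule.span F {v}) d'}.Nonempty :=
      ⟨m, CsdLE_exists m _ (Nat.le_add_left m _) Set.univ⟩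
    have hmem : CsdLE w Set.univ (Submodule.span F {v})
        (csdR w Set.univ (Submodule.span F {v})) := Nat.sInf_mem hne
    have hd1 : CsdLE w Set.univ (Submodule.span F {v}) (d - 1) :=
      CsdLE_mono (by omega) hmem
    have h2 : CsdLE w S (Submodule.span F {v}) (d - 1) :=
      CsdLE_restrict hd1 S (Set.subset_univ S)
    have h3 : CsdLE w S ⊥ (d - 1) := CsdLE_exchange h2 ⊥ hWv
    have h4 : csdR w S ⊥ ≤ d - 1 := Nat.sInf_le h3
    omega
  refine ⟨part1, ?_⟩
  haveI : Fintype ↥S := S.toFinite.fintype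
  set L : (↥S → F) → (Fin m → F) :=
    fun c => ∑ i, c i • w (i : ι) with hL
  have hrange : (Submodule.span F (w '' S) : Set (Fin m → F)) ⊆ Set.range L := by
    intro x hx
    have himg : w '' S = Set.range (w ∘ (Subtype.val : ↥S → ι)) := by
      rw [Set.range_comp, Subtype.range_val]
    rw [SetLike.mem_coe, himg,
      ← Fintype.range_linearCombination F (w ∘ (Subtype.val : ↥S → ι))] at hx
    obtain ⟨c, hc⟩ := hx
    exact ⟨c, by simpa [hL, Fintype.linearCombination_apply] using hc⟩
  have hsubP : {v : Fin m → F | csdR w Set.univ (Submodule.span F {v}) < d}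
      ⊆ Set.range L := fun v hv => hrange (part1 v hv)
  calc {v : Fin m → F | csdR w Set.univ (Submodule.span F {v}) < d}.ncard
      ≤ (Set.range L).ncard := Set.ncard_le_ncard hsubP (Set.toFinite _)
    _ = (L '' Set.univ).ncard := by rw [Set.image_univ]
    _ ≤ (Set.univ : Set (↥S → F)).ncard := Set.ncard_image_le (Set.toFinite _)
    _ = Fintype.card (↥S → F) := by rw [Set.ncard_univ, Nat.card_eq_fintype_card]
    _ = Fintype.card F ^ Fintype.card ↥S := Fintype.card_fun
    _ = Fintype.card F ^ S.ncard := by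
        rw [← Nat.card_coe_set_eq, Nat.card_eq_fintype_card]
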